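/- arXiv:1506.04483 — 2 statements merged into one kernel-verified Lean document; each statement's English description precedes it below -/
import Mathlib

section
/- For positive integers q < p, the parameter a = 1/2 - (p²-3q²)√(4p²-3q²)/(4p³) satisfies 0 < a < 1. -/
theorem stmt_6 (p q : ℕ) (hq : 0 < q) (hpq : q < p)
    (a : ℝ) (ha : a = 1/2 - (((p:ℝ)^2 - 3*(q:ℝ)^2) / (4*(p:ℝ)^3)) * Real.sqrt (4*(p:ℝ)^2 - 3*(q:ℝ)^2)) :
    0 < a ∧ a < 1 := by
  have hp : (0:ℝ) < p := by exact_mod_cast Nat.pos_of_ne_zero (by omega)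
  have hqp : (q:ℝ) < p := by exact_mod_cast hpq
  have hq0 : (0:ℝ) < q := by exact_mod_cast hq
  set s : ℝ := Real.sqrt (4*(p:ℝ)^2 - 3*(q:ℝ)^2) with hs
  have hnn : (0:ℝ) ≤ 4*(p:ℝ)^2 - 3*(q:ℝ)^2 := by nlinarith
  have hs2 : s^2 = 4*(p:ℝ)^2 - 3*(q:ℝ)^2 := Real.sq_sqrt hnn
  have hs0 : 0 ≤ s := Real.sqrt_nonneg _
  have hs_lt : s < 2*p := by
    nlinarith [hs2, hq0]
  have hs_gt : (p:ℝ) < s := by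
    nlinarith [hs2, hqp, hq0]
  have hkey : ((p:ℝ)^2 - 3*(q:ℝ)^2) = s^2 - 3*(p:ℝ)^2 := by
    rw [hs2]; ring
  have hp3 : (0:ℝ) < 4*(p:ℝ)^3 := by positivity
  rw [ha, hkey]
  constructor
  · rw [sub_pos, div_mul_eq_mul_div, div_lt_iff₀ hp3]
    nlinarith [mul_pos (by linarith : (0:ℝ) < 2*p - s) (by positivity : (0:ℝ) < (s + p)^2)]
  · rw [sub_lt_iff_lt_add]
    have : -(1/2 : ℝ) < (s^2 - 3*(p:ℝ)^2) / (4*(p:ℝ)^3) * s := by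
      rw [div_mul_eq_mul_div, lt_div_iff₀ hp3]
      nlinarith [mul_pos (by nlinarith : (0:ℝ) < (s - p)^2) (by linarith : (0:ℝ) < s + 2*p)]
    linarith
end

section
/- Let a ∈ (0,1) and y ∈ (y₁, y₂) where y₁ < 0 < y₂ are the two smallest roots of a - 3y² + 2y³. Then a - y² > 0 and 1 - y > 0, hence w(y) = 2(a - y²)/(1 - y) > 0 and q(y) = (a - 3y² + 2y³)/(a - y²) > 0. -/
theorem stmt_18 (a : ℝ) (ha0 : 0 < a) (ha1 : a < 1)
    (y₁ y₂ y₃ : ℝ) (h12 : y₁ < y₂) (h23 : y₂ < y₃)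
    (hy₁neg : y₁ < 0) (hy₂pos : 0 < y₂)
    (hr1 : a - 3*y₁^2 + 2*y₁^3 = 0)
    (hr2 : a - 3*y₂^2 + 2*y₂^3 = 0)
    (hr3 : a - 3*y₃^2 + 2*y₃^3 = 0)
    (y : ℝ) (hy1 : y₁ < y) (hy2 : y < y₂) :
    0 < a - y^2 ∧ 0 < 1 - y ∧
    0 < 2*(a - y^2) / (1 - y) ∧ 0 < (a - 3*y^2 + 2*y^3) / (a - y^2) := by
  have h12' : y₁ - y₂ ≠ 0 := sub_ne_zero.mpr h12.ne
  have h23' : y₂ - y₃ ≠ 0 := sub_ne_zero.mpr h23.ne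
  have h13' : y₁ - y₃ ≠ 0 := sub_ne_zero.mpr (h12.trans h23).ne
  have e12 : 2*(y₁^2 + y₁*y₂ + y₂^2) - 3*(y₁ + y₂) = 0 := by
    have h : (y₁ - y₂) * (2*(y₁^2 + y₁*y₂ + y₂^2) - 3*(y₁ + y₂)) = 0 := by
      linear_combination hr1 - hr2
    rcases mul_eq_zero.mp h with h | h
    · exact absurd h h12'
    · exact h
  have e23 : 2*(y₂^2 + y₂*y₃ + y₃^2) - 3*(y₂ + y₃) = 0 := by
    have h : (y₂ - y₃) * (2*(y₂^2 + y₂*y₃ + y₃^2) - 3*(y₂ + y₃)) = 0 := by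
      linear_combination hr2 - hr3
    rcases mul_eq_zero.mp h with h | h
    · exact absurd h h23'
    · exact h
  have hs : y₁ + y₂ + y₃ = 3/2 := by
    have h : (y₁ - y₃) * (2*(y₁ + y₂ + y₃) - 3) = 0 := by
      linear_combination e12 - e23
    rcases mul_eq_zero.mp h with h | h
    · exact absurd h h13'
    · linarith
  have hq : y₁*y₂ + y₁*y₃ + y₂*y₃ = 0 := by
    linear_combination (-1/2) * e12 + (y₁ + y₂) * hs
  have hp : y₁*y₂*y₃ = -a/2 := by
    linear_combination y₁ * hq - y₁^2 * hs + (1/2) * hr1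
  have key : ∀ t : ℝ, a - 3*t^2 + 2*t^3 = 2*(t - y₁)*(t - y₂)*(t - y₃) := by
    intro t
    linear_combination 2*t^2 * hs - 2*t * hq + 2 * hp
  -- y₂ < 1
  have hy₂lt1 : y₂ < 1 := by
    by_contra h
    push_neg at h
    have h1 : a - 3*1^2 + 2*1^3 = 2*(1 - y₁)*(1 - y₂)*(1 - y₃) := key 1
    have hA : (0:ℝ) < 1 - y₁ := by linarith
    have hB : 1 - y₂ ≤ 0 := by linarith
    have hC : 1 - y₃ < 0 := by linarith
    nlinarith [mul_nonneg (mul_nonneg hA.le (neg_nonneg.mpr hB)) (neg_nonneg.mpr hC.le)]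
  have hy1' : 0 < y - y₁ := by linarith
  have hy2' : y - y₂ < 0 := by linarith
  have hy3' : y - y₃ < 0 := by linarith
  have hf : 0 < a - 3*y^2 + 2*y^3 := by
    rw [key y]
    have := mul_pos (mul_pos hy1' (neg_pos.mpr hy2')) (neg_pos.mpr hy3')
    nlinarith [this]
  have h1y : 0 < 1 - y := by linarith
  have hay : 0 < a - y^2 := by
    have h2 : 0 ≤ 2*y^2*(1 - y) := by positivity
    nlinarith
  refine ⟨hay, h1y, ?_, ?_⟩
  · exact div_pos (by linarith) h1y
  · exact div_pos hf hay
end
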